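/- There exists a positive constant C (depending only on λ) such that |S_n(x) − T_n(x)| ≤ C a_n for all n = 0, 1, 2, … and all x ∈ K. -/

import Mathlib

open MeasureTheory Filter Set Topology
open scoped ENNReal

noncomputable section

/-- Side length of generation-`n` squares: `s n = λ₁ ⋯ λₙ` (here `Λ k` is `λ_{k+1}`). -/
def sideLen (Λ : ℕ → ℝ) (n : ℕ) : ℝ := ∏ k ∈ Finset.range n, Λ k

/-- Lower-left corner of the generation-`n` square encoded by the word `w`. -/
def cornerPt (Λ : ℕ → ℝ) (w : ℕ → Bool × Bool) (n : ℕ) : ℂ :=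
  ∑ k ∈ Finset.range n,
    (((if (w k).1 then sideLen Λ k - sideLen Λ (k + 1) else 0 : ℝ) : ℂ) +
      ((if (w k).2 then sideLen Λ k - sideLen Λ (k + 1) else 0 : ℝ) : ℂ) * Complex.I)

/-- The (closed) generation-`n` square encoded by the word `w`. -/
def cSquare (Λ : ℕ → ℝ) (w : ℕ → Bool × Bool) (n : ℕ) : Set ℂ :=
  {z : ℂ | (cornerPt Λ w n).re ≤ z.re ∧ z.re ≤ (cornerPt Λ w n).re + sideLen Λ n ∧
    (cornerPt Λ w n).im ≤ z.im ∧ z.im ≤ (cornerPt Λ w n).im + sideLen Λ n}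

/-- The family `𝒟_n` of generation-`n` squares. -/
def genSq (Λ : ℕ → ℝ) (n : ℕ) : Set (Set ℂ) := {Q | ∃ w, Q = cSquare Λ w n}

/-- The planar Cantor set `K = ⋂ₙ ⋃ⱼ Qⱼⁿ`. -/
def cantorK (Λ : ℕ → ℝ) : Set ℂ := ⋂ n, ⋃ w : ℕ → Bool × Bool, cSquare Λ w n

/-- The linear density `a_n = 4^{-n}/s_n` at generation `n`. -/
def linDensity (Λ : ℕ → ℝ) (n : ℕ) : ℝ := 1 / (4 ^ n * sideLen Λ n)

open scoped Classical in
/-- `Q_n(x)`: the generation-`n` square containing `x` (the squares of a given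
generation are pairwise disjoint, so it is unique for `x ∈ K`). -/
def Qn (Λ : ℕ → ℝ) (n : ℕ) (x : ℂ) : Set ℂ :=
  if h : ∃ w, x ∈ cSquare Λ w n then cSquare Λ (Classical.choose h) n else ∅

/-- The truncated Cauchy integral at generation `n`:
`T_n(x) = ∫_{K ∖ Q_n(x)} (x-y)⁻¹ dμ(y)`. -/
def Tn (Λ : ℕ → ℝ) (μ : Measure ℂ) (n : ℕ) (x : ℂ) : ℂ :=
  ∫ y in cantorK Λ \ Qn Λ n x, (x - y)⁻¹ ∂μ

/-- The martingale `S_n(x) = μ(Q_n(x))⁻¹ ∫_{Q_n(x)} T_n dμ`. -/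
def Sn (Λ : ℕ → ℝ) (μ : Measure ℂ) (n : ℕ) (x : ℂ) : ℂ :=
  ⨍ z in Qn Λ n x, Tn Λ μ n z ∂μ

/-!
For `x ∈ Q = Q_n(x)` every `ζ ∈ Q` has `Q_n(ζ) = Q`, so `S_n(x) - T_n(x)` is the average over `Q`
of `T_n(ζ) - T_n(x) = ∫_{K∖Q} ((ζ-y)⁻¹ - (x-y)⁻¹) dμ(y)`. A point `y ∈ K ∖ Q` leaves the chain
`Q_0 ⊇ Q_1 ⊇ ⋯ ⊇ Q_n` at some level `k < n`; there it lies in a sibling of `Q_{k+1}`, hence at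
distance at least `s_k - 2 s_{k+1} ≥ (1 - 2λ) s_k` from `Q`, and the kernel difference is at most
`2 s_n / ((1 - 2λ) s_k)²` on a set of measure `4^{-k}`. Since `s_n ≤ λ^{n-k} s_k`, the resulting sum
is at most `a_n` times the geometric series `∑ (4λ²)^{n-k}`, which converges because `λ < 1/2`.
-/

section SideLength

variable {Λ : ℕ → ℝ} {lam : ℝ}

lemma sideLen_succ (n : ℕ) : sideLen Λ (n + 1) = sideLen Λ n * Λ n :=
  Finset.prod_range_succ _ _

lemma sideLen_pos (hΛ : ∀ k, 0 < Λ k) (n : ℕ) : 0 < sideLen Λ n :=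
  Finset.prod_pos fun k _ => hΛ k

lemma two_mul_sideLen_succ_lt (hΛ : ∀ k, Λ k ∈ Ioo (0 : ℝ) (1 / 2)) (n : ℕ) :
    2 * sideLen Λ (n + 1) < sideLen Λ n := by
  have hs := sideLen_pos (fun k => (hΛ k).1) n
  rw [sideLen_succ]
  nlinarith [(hΛ n).2]

lemma sideLen_le_pow_mul (hΛ : ∀ k, Λ k ∈ Ioc 0 lam) {k n : ℕ} (hkn : k ≤ n) :
    sideLen Λ n ≤ lam ^ (n - k) * sideLen Λ k := by
  induction n, hkn using Nat.le_induction with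
  | base => simp
  | succ n hkn ih =>
    rw [sideLen_succ, Nat.sub_add_comm hkn, pow_succ]
    have := sideLen_pos (fun k => (hΛ k).1) n
    calc sideLen Λ n * Λ n ≤ lam ^ (n - k) * sideLen Λ k * lam :=
          mul_le_mul ih (hΛ n).2 (hΛ n).1.le (this.le.trans ih)
      _ = _ := by ring

lemma one_sub_two_mul_le_gap (hΛ : ∀ k, Λ k ∈ Ioc 0 lam) (n : ℕ) :
    (1 - 2 * lam) * sideLen Λ n ≤ sideLen Λ n - 2 * sideLen Λ (n + 1) := by
  have := sideLen_pos (fun k => (hΛ k).1) n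
  rw [sideLen_succ]
  nlinarith [(hΛ n).2]

end SideLength

section Geometry

variable {Λ : ℕ → ℝ} {w w' : ℕ → Bool × Bool} {n : ℕ} {x y z : ℂ}

lemma cornerPt_zero : cornerPt Λ w 0 = 0 := by
  simp [cornerPt]

lemma cornerPt_succ_re : (cornerPt Λ w (n + 1)).re
    = (cornerPt Λ w n).re + if (w n).1 then sideLen Λ n - sideLen Λ (n + 1) else 0 := by
  simp [cornerPt, Finset.sum_range_succ]

lemma cornerPt_succ_im : (cornerPt Λ w (n + 1)).im
    = (cornerPt Λ w n).im + if (w n).2 then sideLen Λ n - sideLen Λ (n + 1) else 0 := by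
  simp [cornerPt, Finset.sum_range_succ]

lemma cornerPt_succ_congr (hc : cornerPt Λ w n = cornerPt Λ w' n) (hw : w n = w' n) :
    cornerPt Λ w (n + 1) = cornerPt Λ w' (n + 1) := by
  unfold cornerPt at hc ⊢
  rw [Finset.sum_range_succ, Finset.sum_range_succ, hc, hw]

lemma cSquare_congr (hc : cornerPt Λ w n = cornerPt Λ w' n) :
    cSquare Λ w n = cSquare Λ w' n := by
  rw [cSquare, cSquare, hc]

lemma cSquare_succ_subset (hΛ : ∀ k, Λ k ∈ Ioo (0 : ℝ) (1 / 2)) (n : ℕ) :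
    cSquare Λ w (n + 1) ⊆ cSquare Λ w n := by
  rintro z ⟨h₁, h₂, h₃, h₄⟩
  rw [cornerPt_succ_re] at h₁ h₂
  rw [cornerPt_succ_im] at h₃ h₄
  have := two_mul_sideLen_succ_lt hΛ n
  have := sideLen_pos (fun k => (hΛ k).1) (n + 1)
  refine ⟨?_, ?_, ?_, ?_⟩ <;> split_ifs at h₁ h₂ h₃ h₄ <;> linarith

lemma antitone_cSquare (hΛ : ∀ k, Λ k ∈ Ioo (0 : ℝ) (1 / 2)) :
    Antitone (cSquare Λ w) :=
  antitone_nat_of_succ_le (cSquare_succ_subset hΛ)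

lemma gap_le_abs_sub {a d t u v : ℝ} {b b' : Bool} (hb : b ≠ b')
    (hu : a + (if b then d else 0) ≤ u ∧ u ≤ a + (if b then d else 0) + t)
    (hv : a + (if b' then d else 0) ≤ v ∧ v ≤ a + (if b' then d else 0) + t) :
    d - t ≤ |u - v| := by
  rw [le_abs]
  cases b <;> cases b' <;> simp only [ne_eq, not_true_eq_false, reduceCtorEq,
    if_true, Bool.false_eq_true, if_false] at hb hu hv ⊢ <;>
    first | (left; linarith) | (right; linarith)

lemma gap_le_dist_of_ne (hc : cornerPt Λ w n = cornerPt Λ w' n) (hw : w n ≠ w' n)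
    (hx : x ∈ cSquare Λ w (n + 1)) (hy : y ∈ cSquare Λ w' (n + 1)) :
    sideLen Λ n - 2 * sideLen Λ (n + 1) ≤ dist x y := by
  obtain ⟨hx₁, hx₂, hx₃, hx₄⟩ := hx
  obtain ⟨hy₁, hy₂, hy₃, hy₄⟩ := hy
  rw [cornerPt_succ_re] at hx₁ hx₂ hy₁ hy₂
  rw [cornerPt_succ_im] at hx₃ hx₄ hy₃ hy₄
  rw [← hc] at hy₁ hy₂ hy₃ hy₄
  have hgap : sideLen Λ n - 2 * sideLen Λ (n + 1)
      = (sideLen Λ n - sideLen Λ (n + 1)) - sideLen Λ (n + 1) := by ring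
  rw [hgap, dist_eq_norm]
  rw [Ne, Prod.ext_iff, not_and_or] at hw
  rcases hw with h | h
  · exact (gap_le_abs_sub h ⟨hx₁, hx₂⟩ ⟨hy₁, hy₂⟩).trans (Complex.abs_re_le_norm (x - y))
  · exact (gap_le_abs_sub h ⟨hx₃, hx₄⟩ ⟨hy₃, hy₄⟩).trans (Complex.abs_im_le_norm (x - y))

lemma cornerPt_eq_of_mem (hΛ : ∀ k, Λ k ∈ Ioo (0 : ℝ) (1 / 2))
    (hw : x ∈ cSquare Λ w n) (hw' : x ∈ cSquare Λ w' n) :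
    cornerPt Λ w n = cornerPt Λ w' n := by
  induction n with
  | zero => rw [cornerPt_zero, cornerPt_zero]
  | succ n ih =>
    have hc := ih (cSquare_succ_subset hΛ n hw) (cSquare_succ_subset hΛ n hw')
    by_cases hwn : w n = w' n
    · exact cornerPt_succ_congr hc hwn
    · have hgap := gap_le_dist_of_ne hc hwn hw hw'
      rw [dist_self] at hgap
      linarith [two_mul_sideLen_succ_lt hΛ n]

lemma Qn_eq (hΛ : ∀ k, Λ k ∈ Ioo (0 : ℝ) (1 / 2)) (hx : x ∈ cSquare Λ w n) :
    Qn Λ n x = cSquare Λ w n := by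
  have h : ∃ w', x ∈ cSquare Λ w' n := ⟨w, hx⟩
  rw [Qn, dif_pos h]
  exact cSquare_congr (cornerPt_eq_of_mem hΛ (Classical.choose_spec h) hx)

lemma exists_mem_cSquare (hx : x ∈ cantorK Λ) (n : ℕ) : ∃ w, x ∈ cSquare Λ w n :=
  mem_iUnion.mp (mem_iInter.mp hx n)

lemma cantorK_subset_cSquare_zero : cantorK Λ ⊆ cSquare Λ w 0 := fun _ hz =>
  have ⟨_, hw'⟩ := exists_mem_cSquare hz 0
  cSquare_congr (cornerPt_zero.trans cornerPt_zero.symm) ▸ hw'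

lemma gap_le_dist_of_mem_cantorK (hΛ : ∀ k, Λ k ∈ Ioo (0 : ℝ) (1 / 2))
    (hz : z ∈ cSquare Λ w (n + 1)) (hyK : y ∈ cantorK Λ) (hyn : y ∈ cSquare Λ w n)
    (hy : y ∉ cSquare Λ w (n + 1)) :
    sideLen Λ n - 2 * sideLen Λ (n + 1) ≤ dist z y := by
  obtain ⟨w', hw'⟩ := exists_mem_cSquare hyK (n + 1)
  have hc := cornerPt_eq_of_mem hΛ hyn (cSquare_succ_subset hΛ n hw')
  refine gap_le_dist_of_ne hc (fun hwn => hy ?_) hz hw'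
  rwa [cSquare_congr (cornerPt_succ_congr hc hwn)]

lemma norm_sub_le_of_mem_cSquare (hx : x ∈ cSquare Λ w n) (hy : y ∈ cSquare Λ w n) :
    ‖x - y‖ ≤ 2 * sideLen Λ n := by
  obtain ⟨hx₁, hx₂, hx₃, hx₄⟩ := hx
  obtain ⟨hy₁, hy₂, hy₃, hy₄⟩ := hy
  have hre : |x.re - y.re| ≤ sideLen Λ n := abs_le.mpr ⟨by linarith, by linarith⟩
  have him : |x.im - y.im| ≤ sideLen Λ n := abs_le.mpr ⟨by linarith, by linarith⟩
  have := Complex.norm_le_abs_re_add_abs_im (x - y)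
  rw [Complex.sub_re, Complex.sub_im] at this
  linarith

end Geometry

section Measurability

variable {Λ : ℕ → ℝ} {w : ℕ → Bool × Bool}

lemma isClosed_cSquare (n : ℕ) : IsClosed (cSquare Λ w n) := by
  have hre := Complex.continuous_re
  have him := Complex.continuous_im
  exact (isClosed_le continuous_const hre).inter ((isClosed_le hre continuous_const).inter
    ((isClosed_le continuous_const him).inter (isClosed_le him continuous_const)))

lemma measurableSet_cSquare (n : ℕ) : MeasurableSet (cSquare Λ w n) :=
  (isClosed_cSquare n).measurableSet

lemma cSquare_eq_truncate (w : ℕ → Bool × Bool) (n : ℕ) :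
    cSquare Λ w n = cSquare Λ (fun k => if k < n then w k else (true, true)) n := by
  refine cSquare_congr (Finset.sum_congr rfl fun k hk => ?_)
  simp only [if_pos (Finset.mem_range.mp hk)]

lemma isClosed_cantorK : IsClosed (cantorK Λ) := by
  refine isClosed_iInter fun n => ?_
  let square (v : Fin n → Bool × Bool) : Set ℂ :=
    cSquare Λ (fun k => if h : k < n then v ⟨k, h⟩ else (true, true)) n
  have : ⋃ w : ℕ → Bool × Bool, cSquare Λ w n = ⋃ v, square v := by
    refine Subset.antisymm (iUnion_subset fun w => ?_) (iUnion_subset fun v => ?_)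
    · rw [cSquare_eq_truncate]
      exact subset_iUnion square (fun k => w k)
    · exact subset_iUnion (fun w => cSquare Λ w n) _
  rw [this]
  exact isClosed_iUnion_of_finite fun v => isClosed_cSquare n

lemma measurableSet_cantorK : MeasurableSet (cantorK Λ) :=
  isClosed_cantorK.measurableSet

end Measurability

section ExitLevel

variable {α E : Type*} [NormedAddCommGroup E] {S : ℕ → Set α} {s : Set α} {F : α → E}
  {b : ℕ → ℝ} {n : ℕ}

lemma exists_mem_notMem_succ {y : α} (h₀ : y ∈ S 0) (hn : y ∉ S n) :
    ∃ k < n, y ∈ S k ∧ y ∉ S (k + 1) := by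
  induction n with
  | zero => exact absurd h₀ hn
  | succ n ih =>
    by_cases hy : y ∈ S n
    · exact ⟨n, n.lt_succ_self, hy, hn⟩
    · obtain ⟨k, hkn, hk⟩ := ih hy
      exact ⟨k, hkn.trans n.lt_succ_self, hk⟩

lemma norm_le_sum_indicator (hs : s ⊆ S 0) (hb : ∀ k, 0 ≤ b k)
    (hF : ∀ k < n, ∀ y ∈ s, y ∈ S k → y ∉ S (k + 1) → ‖F y‖ ≤ b k) {y : α}
    (hy : y ∈ s \ S n) :
    ‖F y‖ ≤ ∑ k ∈ Finset.range n, (S k).indicator (fun _ => b k) y := by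
  obtain ⟨k, hkn, hyk, hyk'⟩ := exists_mem_notMem_succ (hs hy.1) hy.2
  calc ‖F y‖ ≤ b k := hF k hkn y hy.1 hyk hyk'
    _ = (S k).indicator (fun _ => b k) y := (indicator_of_mem hyk (fun _ => b k)).symm
    _ ≤ _ := Finset.single_le_sum (fun j _ => indicator_nonneg (fun _ _ => hb j) y)
          (Finset.mem_range.mpr hkn)

variable [MeasurableSpace α] {μ : Measure α} [IsFiniteMeasure μ]

lemma integrable_sum_indicator (hS : ∀ k, MeasurableSet (S k)) :
    Integrable (fun y => ∑ k ∈ Finset.range n, (S k).indicator (fun _ => b k) y) μ :=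
  integrable_finsetSum _ fun k _ => (integrable_const (b k)).indicator (hS k)

lemma integrableOn_sdiff_of_norm_le (hS : ∀ k, MeasurableSet (S k)) (hsm : MeasurableSet s)
    (hs : s ⊆ S 0) (hb : ∀ k, 0 ≤ b k) (hFm : AEStronglyMeasurable F μ)
    (hF : ∀ k < n, ∀ y ∈ s, y ∈ S k → y ∉ S (k + 1) → ‖F y‖ ≤ b k) :
    IntegrableOn F (s \ S n) μ :=
  (integrable_sum_indicator hS).integrableOn.mono' hFm.restrict
    (ae_restrict_of_forall_mem (hsm.diff (hS n)) fun _ => norm_le_sum_indicator hs hb hF)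

lemma norm_setIntegral_sdiff_le [NormedSpace ℝ E] (hS : ∀ k, MeasurableSet (S k))
    (hsm : MeasurableSet s) (hs : s ⊆ S 0) (hb : ∀ k, 0 ≤ b k)
    (hF : ∀ k < n, ∀ y ∈ s, y ∈ S k → y ∉ S (k + 1) → ‖F y‖ ≤ b k) :
    ‖∫ y in s \ S n, F y ∂μ‖ ≤ ∑ k ∈ Finset.range n, b k * μ.real (S k) := by
  have hG := integrable_sum_indicator (μ := μ) (b := b) (n := n) hS
  calc ‖∫ y in s \ S n, F y ∂μ‖
      ≤ ∫ y in s \ S n, ∑ k ∈ Finset.range n, (S k).indicator (fun _ => b k) y ∂μ :=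
        norm_integral_le_of_norm_le hG.integrableOn
          (ae_restrict_of_forall_mem (hsm.diff (hS n)) fun _ => norm_le_sum_indicator hs hb hF)
    _ ≤ ∫ y, ∑ k ∈ Finset.range n, (S k).indicator (fun _ => b k) y ∂μ :=
        setIntegral_le_integral hG (ae_of_all _ fun y =>
          Finset.sum_nonneg fun k _ => indicator_nonneg (fun _ _ => hb k) y)
    _ = ∑ k ∈ Finset.range n, b k * μ.real (S k) := by
        rw [integral_finsetSum _ fun k _ => (integrable_const (b k)).indicator (hS k)]
        simp only [integral_indicator_const _ (hS _), smul_eq_mul, mul_comm]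

end ExitLevel

lemma norm_setAverage_sub_le {α E : Type*} [MeasurableSpace α] [NormedAddCommGroup E]
    [NormedSpace ℝ E] [CompleteSpace E] {μ : Measure α} {s : Set α} {f : α → E} {c : E}
    {B : ℝ} (hs : MeasurableSet s) (h₀ : μ s ≠ 0) (hfin : μ s ≠ ∞)
    (hf : AEStronglyMeasurable f μ) (hB : ∀ x ∈ s, ‖f x - c‖ ≤ B) :
    ‖(⨍ x in s, f x ∂μ) - c‖ ≤ B := by
  have hball : ∀ᵐ x ∂μ.restrict s, f x ∈ Metric.closedBall c B :=
    ae_restrict_of_forall_mem hs fun x hx => mem_closedBall_iff_norm.mpr (hB x hx)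
  have hfi : IntegrableOn f s μ := Measure.integrableOn_of_bounded (M := ‖c‖ + B) hfin hf
    (ae_restrict_of_forall_mem hs fun x hx => by
      linarith [norm_le_norm_add_norm_sub' (f x) c, hB x hx])
  exact mem_closedBall_iff_norm.mp
    ((convex_closedBall c B).set_average_mem Metric.isClosed_closedBall h₀ hfin hball hfi)

lemma sum_range_pow_sub_le {r : ℝ} (h₀ : 0 ≤ r) (h₁ : r < 1) (n : ℕ) :
    ∑ k ∈ Finset.range n, r ^ (n - k) ≤ (1 - r)⁻¹ :=
  calc ∑ k ∈ Finset.range n, r ^ (n - k) = ∑ k ∈ Finset.range n, r ^ (k + 1) := by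
        rw [← Finset.sum_range_reflect (fun k => r ^ (k + 1)) n]
        refine Finset.sum_congr rfl fun k hk => ?_
        have := Finset.mem_range.mp hk
        congr 1
        omega
    _ ≤ ∑ k ∈ Finset.range n, r ^ k :=
        Finset.sum_le_sum fun k _ => pow_le_pow_of_le_one h₀ h₁.le k.le_succ
    _ ≤ r ^ 0 / (1 - r) := by
        rw [Finset.range_eq_Ico]
        exact geom_sum_Ico_le_of_lt_one h₀ h₁
    _ = (1 - r)⁻¹ := by rw [pow_zero, one_div]

lemma norm_inv_sub_inv_le {𝕜 : Type*} [NormedField 𝕜] {a b : 𝕜} {c : ℝ} (hc : 0 < c)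
    (ha : c ≤ ‖a‖) (hb : c ≤ ‖b‖) : ‖a⁻¹ - b⁻¹‖ ≤ ‖b - a‖ / c ^ 2 := by
  rw [inv_sub_inv (norm_pos_iff.mp (hc.trans_le ha)) (norm_pos_iff.mp (hc.trans_le hb)),
    norm_div, norm_mul, sq]
  exact div_le_div_of_nonneg_left (norm_nonneg _) (mul_pos hc hc)
    (mul_le_mul ha hb hc.le (norm_nonneg _))

section Estimates

variable {Λ : ℕ → ℝ} {lam : ℝ} {k n : ℕ}

lemma sideLen_div_le_linDensity (hΛ : ∀ k, Λ k ∈ Ioc 0 lam) (hkn : k ≤ n) :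
    sideLen Λ n / (4 ^ k * sideLen Λ k ^ 2) ≤ (4 * lam ^ 2) ^ (n - k) * linDensity Λ n := by
  have hsn := sideLen_pos (fun k => (hΛ k).1) n
  have hsk := sideLen_pos (fun k => (hΛ k).1) k
  have hpow : (4 : ℝ) ^ n = 4 ^ (n - k) * 4 ^ k := by rw [← pow_add, Nat.sub_add_cancel hkn]
  rw [linDensity, mul_one_div, div_le_div_iff₀ (by positivity) (by positivity)]
  calc sideLen Λ n * (4 ^ n * sideLen Λ n) = 4 ^ (n - k) * 4 ^ k * sideLen Λ n ^ 2 := by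
        rw [hpow]; ring
    _ ≤ 4 ^ (n - k) * 4 ^ k * (lam ^ (n - k) * sideLen Λ k) ^ 2 := by
        gcongr
        exact sideLen_le_pow_mul hΛ hkn
    _ = (4 * lam ^ 2) ^ (n - k) * (4 ^ k * sideLen Λ k ^ 2) := by ring

lemma sum_le_linDensity (hΛ : ∀ k, Λ k ∈ Ioc 0 lam) (hlam : lam < 1 / 2) (n : ℕ) :
    ∑ k ∈ Finset.range n, 2 * sideLen Λ n / ((1 - 2 * lam) * sideLen Λ k) ^ 2 * (4 : ℝ)⁻¹ ^ k
      ≤ 2 / ((1 - 2 * lam) ^ 2 * (1 - 4 * lam ^ 2)) * linDensity Λ n := by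
  have hlam₀ : 0 < lam := (hΛ 0).1.trans_le (hΛ 0).2
  have hr : 4 * lam ^ 2 < 1 := by nlinarith
  have hc : 0 ≤ 2 / (1 - 2 * lam) ^ 2 := by positivity
  calc ∑ k ∈ Finset.range n, 2 * sideLen Λ n / ((1 - 2 * lam) * sideLen Λ k) ^ 2 * 4⁻¹ ^ k
      = ∑ k ∈ Finset.range n, 2 / (1 - 2 * lam) ^ 2 *
          (sideLen Λ n / (4 ^ k * sideLen Λ k ^ 2)) := by
        refine Finset.sum_congr rfl fun k _ => ?_
        rw [inv_pow]
        field_simp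
    _ ≤ ∑ k ∈ Finset.range n, 2 / (1 - 2 * lam) ^ 2 *
          ((4 * lam ^ 2) ^ (n - k) * linDensity Λ n) :=
        Finset.sum_le_sum fun k hk => mul_le_mul_of_nonneg_left
          (sideLen_div_le_linDensity hΛ (Finset.mem_range.mp hk).le) hc
    _ = 2 / (1 - 2 * lam) ^ 2 * linDensity Λ n *
          ∑ k ∈ Finset.range n, (4 * lam ^ 2) ^ (n - k) := by
        rw [Finset.mul_sum]
        exact Finset.sum_congr rfl fun k _ => by ring
    _ ≤ 2 / (1 - 2 * lam) ^ 2 * linDensity Λ n * (1 - 4 * lam ^ 2)⁻¹ := by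
        have := sideLen_pos (fun k => (hΛ k).1) n
        have : 0 ≤ linDensity Λ n := by rw [linDensity]; positivity
        gcongr
        exact sum_range_pow_sub_le (by positivity) hr n
    _ = 2 / ((1 - 2 * lam) ^ 2 * (1 - 4 * lam ^ 2)) * linDensity Λ n := by
        field_simp

end Estimates

section CauchyKernel

variable {Λ : ℕ → ℝ} {lam : ℝ} {w : ℕ → Bool × Bool} {k n : ℕ} {x y ζ : ℂ}
  {μ : Measure ℂ} [IsFiniteMeasure μ]

lemma gap_le_norm_sub (hΛ : ∀ k, Λ k ∈ Ioc 0 lam) (hlam : lam < 1 / 2) (hkn : k < n)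
    (hζ : ζ ∈ cSquare Λ w n) (hyK : y ∈ cantorK Λ) (hyk : y ∈ cSquare Λ w k)
    (hy : y ∉ cSquare Λ w (k + 1)) :
    (1 - 2 * lam) * sideLen Λ k ≤ ‖ζ - y‖ := by
  have hΛhalf : ∀ k, Λ k ∈ Ioo (0 : ℝ) (1 / 2) := fun k => ⟨(hΛ k).1, (hΛ k).2.trans_lt hlam⟩
  rw [← dist_eq_norm]
  exact (one_sub_two_mul_le_gap hΛ k).trans
    (gap_le_dist_of_mem_cantorK hΛhalf (antitone_cSquare hΛhalf hkn hζ) hyK hyk hy)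

lemma gap_pos (hΛ : ∀ k, Λ k ∈ Ioc 0 lam) (hlam : lam < 1 / 2) (k : ℕ) :
    0 < (1 - 2 * lam) * sideLen Λ k :=
  mul_pos (by linarith) (sideLen_pos (fun k => (hΛ k).1) k)

lemma integrableOn_inv_sub (hΛ : ∀ k, Λ k ∈ Ioc 0 lam) (hlam : lam < 1 / 2)
    (hζ : ζ ∈ cSquare Λ w n) :
    IntegrableOn (fun y => (ζ - y)⁻¹) (cantorK Λ \ cSquare Λ w n) μ :=
  integrableOn_sdiff_of_norm_le (b := fun k => ((1 - 2 * lam) * sideLen Λ k)⁻¹)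
    (fun _ => measurableSet_cSquare _) measurableSet_cantorK cantorK_subset_cSquare_zero
    (fun k => (inv_pos.mpr (gap_pos hΛ hlam k)).le)
    (measurable_const.sub measurable_id).inv.aestronglyMeasurable
    fun k hkn _ hyK hyk hy => by
      rw [norm_inv]
      exact inv_anti₀ (gap_pos hΛ hlam k) (gap_le_norm_sub hΛ hlam hkn hζ hyK hyk hy)

lemma norm_setIntegral_inv_sub_sub_le (hΛ : ∀ k, Λ k ∈ Ioc 0 lam) (hlam : lam < 1 / 2)
    (hμQ : ∀ (w : ℕ → Bool × Bool) (n : ℕ), μ (cSquare Λ w n) = (4 : ℝ≥0∞)⁻¹ ^ n)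
    (hx : x ∈ cSquare Λ w n) (hζ : ζ ∈ cSquare Λ w n) :
    ‖∫ y in cantorK Λ \ cSquare Λ w n, (ζ - y)⁻¹ ∂μ
        - ∫ y in cantorK Λ \ cSquare Λ w n, (x - y)⁻¹ ∂μ‖
      ≤ ∑ k ∈ Finset.range n,
          2 * sideLen Λ n / ((1 - 2 * lam) * sideLen Λ k) ^ 2 * (4 : ℝ)⁻¹ ^ k := by
  have hb : ∀ k, 0 ≤ 2 * sideLen Λ n / ((1 - 2 * lam) * sideLen Λ k) ^ 2 := fun k => by
    have := sideLen_pos (fun k => (hΛ k).1) n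
    positivity
  have hF : ∀ k < n, ∀ y ∈ cantorK Λ, y ∈ cSquare Λ w k → y ∉ cSquare Λ w (k + 1) →
      ‖(ζ - y)⁻¹ - (x - y)⁻¹‖ ≤ 2 * sideLen Λ n / ((1 - 2 * lam) * sideLen Λ k) ^ 2 := by
    intro k hkn y hyK hyk hy
    calc ‖(ζ - y)⁻¹ - (x - y)⁻¹‖ ≤ ‖(x - y) - (ζ - y)‖ / ((1 - 2 * lam) * sideLen Λ k) ^ 2 :=
          norm_inv_sub_inv_le (gap_pos hΛ hlam k) (gap_le_norm_sub hΛ hlam hkn hζ hyK hyk hy)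
            (gap_le_norm_sub hΛ hlam hkn hx hyK hyk hy)
      _ ≤ 2 * sideLen Λ n / ((1 - 2 * lam) * sideLen Λ k) ^ 2 := by
          rw [sub_sub_sub_cancel_right]
          gcongr
          exact norm_sub_le_of_mem_cSquare hx hζ
  have hμ : ∀ k, μ.real (cSquare Λ w k) = (4 : ℝ)⁻¹ ^ k := fun k => by
    simp [measureReal_def, hμQ]
  rw [← integral_sub (integrableOn_inv_sub hΛ hlam hζ) (integrableOn_inv_sub hΛ hlam hx)]
  simpa only [hμ] using norm_setIntegral_sdiff_le (μ := μ) (S := cSquare Λ w)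
    (fun _ => measurableSet_cSquare _) measurableSet_cantorK cantorK_subset_cSquare_zero hb hF

end CauchyKernel

theorem martingale_minus_truncated_bound_general (Λ : ℕ → ℝ) (lam : ℝ) (hlam : lam < 1 / 2)
    (hΛ : ∀ n, 1 / 4 ≤ Λ n ∧ Λ n ≤ lam)
    (μ : Measure ℂ) [IsProbabilityMeasure μ]
    (hμQ : ∀ (w : ℕ → Bool × Bool) (n : ℕ), μ (cSquare Λ w n) = (4 : ℝ≥0∞)⁻¹ ^ n) :
    ∃ C : ℝ, 0 < C ∧ ∀ (n : ℕ), ∀ x ∈ cantorK Λ,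
      ‖Sn Λ μ n x - Tn Λ μ n x‖ ≤ C * linDensity Λ n := by
  have hΛlam : ∀ k, Λ k ∈ Ioc 0 lam := fun k => ⟨by linarith [(hΛ k).1], (hΛ k).2⟩
  have hΛhalf : ∀ k, Λ k ∈ Ioo (0 : ℝ) (1 / 2) :=
    fun k => ⟨(hΛlam k).1, (hΛ k).2.trans_lt hlam⟩
  refine ⟨2 / ((1 - 2 * lam) ^ 2 * (1 - 4 * lam ^ 2)), ?_, fun n x hx => ?_⟩
  · have : 1 / 4 ≤ lam := (hΛ 0).1.trans (hΛ 0).2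
    exact div_pos two_pos (mul_pos (pow_pos (by linarith) 2) (by nlinarith))
  obtain ⟨w, hw⟩ := exists_mem_cSquare hx n
  have hT : ∀ ζ ∈ cSquare Λ w n,
      Tn Λ μ n ζ = ∫ y in cantorK Λ \ cSquare Λ w n, (ζ - y)⁻¹ ∂μ := fun ζ hζ => by
    rw [Tn, Qn_eq hΛhalf hζ]
  have hS : Sn Λ μ n x
      = ⨍ ζ in cSquare Λ w n, ∫ y in cantorK Λ \ cSquare Λ w n, (ζ - y)⁻¹ ∂μ ∂μ := by
    rw [Sn, Qn_eq hΛhalf hw]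
    exact setAverage_congr_fun (measurableSet_cSquare n) (ae_of_all _ hT)
  rw [hS, hT x hw]
  refine norm_setAverage_sub_le (measurableSet_cSquare n) (by simp [hμQ]) (measure_ne_top _ _)
    ((measurable_fst.sub measurable_snd).inv.stronglyMeasurable.integral_prod_right'
      ).aestronglyMeasurable fun ζ hζ => ?_
  exact (norm_setIntegral_inv_sub_sub_le hΛlam hlam hμQ hw hζ).trans
    (sum_le_linDensity hΛlam hlam n)

/-- `|S_n(x) - T_n(x)| ≤ C a_n` for all `n ≥ 0` and `x ∈ K`. -/
theorem martingale_minus_truncated_bound (Λ : ℕ → ℝ) (lam : ℝ) (hlam : lam < 1 / 2)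
    (hΛ : ∀ n, 1 / 4 ≤ Λ n ∧ Λ n ≤ lam)
    (μ : Measure ℂ) [IsProbabilityMeasure μ]
    (hμK : μ (cantorK Λ) = 1)
    (hμQ : ∀ (w : ℕ → Bool × Bool) (n : ℕ), μ (cSquare Λ w n) = (4 : ℝ≥0∞)⁻¹ ^ n) :
    ∃ C : ℝ, 0 < C ∧ ∀ (n : ℕ), ∀ x ∈ cantorK Λ,
      ‖Sn Λ μ n x - Tn Λ μ n x‖ ≤ C * linDensity Λ n :=
  martingale_minus_truncated_bound_general Λ lam hlam hΛ μ hμQ
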